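/- For every finite simple graph H with vertex set {1,…,k}, k ≥ 2, there exists a constant C = C(H) such that for all graphons W₁ and W₂: ‖(W₁)_H − (W₂)_H‖_□ ≤ C·‖W₁ − W₂‖_□, where (W_i)_H denotes the 2-point conditional kernel of H with respect to the graphon W_i. -/

import Mathlib

open MeasureTheory
open scoped Classical

/-- Lebesgue measure restricted to `[0,1]`; a probability measure. -/
noncomputable def mu01 : Measure ℝ := volume.restrict (Set.Icc 0 1)

instance : IsProbabilityMeasure mu01 := by
  unfold mu01
  constructor
  rw [Measure.restrict_apply_univ, Real.volume_Icc]
  norm_num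

/-- Product of `k` copies of `mu01`: the joint law of `k` i.i.d. uniforms on `[0,1]`. -/
noncomputable def pimeas (k : ℕ) : Measure (Fin k → ℝ) := Measure.pi fun _ => mu01

/-- A graphon: a symmetric measurable function with values in `[0,1]`. -/
def IsGraphon (W : ℝ → ℝ → ℝ) : Prop :=
  Measurable (Function.uncurry W) ∧ (∀ x y, W x y = W y x) ∧ ∀ x y, W x y ∈ Set.Icc (0 : ℝ) 1

/-- Product of `W (x a) (x b)` over the (unordered) pairs `a < b` related by `R`. -/
noncomputable def pairProd {m : ℕ} (R : Fin m → Fin m → Prop) (W : ℝ → ℝ → ℝ)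
    (x : Fin m → ℝ) : ℝ :=
  ∏ p : Fin m × Fin m, if p.1 < p.2 ∧ R p.1 p.2 then W (x p.1) (x p.2) else 1

/-- Homomorphism density `t(H,W)`. -/
noncomputable def homDensity {k : ℕ} (H : SimpleGraph (Fin k)) (W : ℝ → ℝ → ℝ) : ℝ :=
  ∫ x, pairProd H.Adj W x ∂(pimeas k)

/-- 1-point conditional homomorphism density `t_a(x,H,W)`. -/
noncomputable def homDensity1 {k : ℕ} (H : SimpleGraph (Fin k)) (W : ℝ → ℝ → ℝ)
    (a : Fin k) (t : ℝ) : ℝ :=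
  ∫ x, pairProd H.Adj W (Function.update x a t) ∂(pimeas k)

/-- 2-point conditional homomorphism density `t_{a,b}(x,y,H,W)`. -/
noncomputable def homDensity2 {k : ℕ} (H : SimpleGraph (Fin k)) (W : ℝ → ℝ → ℝ)
    (a b : Fin k) (s t : ℝ) : ℝ :=
  ∫ x, pairProd H.Adj W (Function.update (Function.update x a s) b t) ∂(pimeas k)

/-- `W` is `H`-regular: the average 1-point conditional density is a.e. `t(H,W)`. -/
def IsHRegular {k : ℕ} (H : SimpleGraph (Fin k)) (W : ℝ → ℝ → ℝ) : Prop :=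
  ∀ᵐ t ∂mu01, (∑ a : Fin k, homDensity1 H W a t) / (k : ℝ) = homDensity H W

/-- The number of automorphisms of `H`. -/
noncomputable def autCard {k : ℕ} (H : SimpleGraph (Fin k)) : ℕ :=
  (Finset.univ.filter fun σ : Equiv.Perm (Fin k) =>
    ∀ u v, H.Adj (σ u) (σ v) ↔ H.Adj u v).card

/-- Number of injective homomorphisms from `H` into `G`; equals `|Aut(H)| · X(H,G)`. -/
noncomputable def injHomCount {k n : ℕ} (H : SimpleGraph (Fin k)) (G : SimpleGraph (Fin n)) : ℕ :=
  (Finset.univ.filter fun φ : Fin k → Fin n =>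
    Function.Injective φ ∧ ∀ u v, H.Adj u v → G.Adj (φ u) (φ v)).card

/-- The number of copies of `H` in `G`: `X(H,G) = injHomCount H G / |Aut(H)|`. -/
noncomputable def subCount {k n : ℕ} (H : SimpleGraph (Fin k)) (G : SimpleGraph (Fin n)) : ℝ :=
  (injHomCount H G : ℝ) / (autCard H : ℝ)

/-- Empirical homomorphism density `t̂(H,G) = |Aut(H)| · X(H,G) / (n)_k`. -/
noncomputable def empDensity {k n : ℕ} (H : SimpleGraph (Fin k)) (G : SimpleGraph (Fin n)) : ℝ :=
  (injHomCount H G : ℝ) / (n.descFactorial k : ℝ)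

/-- Sample space for the `W`-random graph on `n` vertices: uniform vertex labels and
uniform edge labels. -/
abbrev GraphonSpace (n : ℕ) := (Fin n → ℝ) × (Fin n → Fin n → ℝ)

/-- The joint law of the i.i.d. uniform vertex and edge labels. -/
noncomputable def graphonMeasure (n : ℕ) : Measure (GraphonSpace n) :=
  (Measure.pi fun _ : Fin n => mu01).prod
    (Measure.pi fun _ : Fin n => Measure.pi fun _ : Fin n => mu01)

/-- The `W`-random graph `G(n, W)` built from the labels `ω`: vertices `i ≠ j` are adjacent
iff `Y_{ij} ≤ W (U_i) (U_j)`. -/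
def wGraph {n : ℕ} (W : ℝ → ℝ → ℝ) (ω : GraphonSpace n) : SimpleGraph (Fin n) where
  Adj i j := i ≠ j ∧ ω.2 (min i j) (max i j) ≤ W (ω.1 (min i j)) (ω.1 (max i j))
  symm := by
    refine ⟨?_⟩
    rintro i j ⟨hne, hle⟩
    refine ⟨hne.symm, ?_⟩
    rwa [min_comm j i, max_comm j i]
  loopless := ⟨fun i h => h.1 rfl⟩

/-- Image of the adjacency relation of `H` under a map `f` of vertex sets. -/
def mappedAdj {k m : ℕ} (H : SimpleGraph (Fin k)) (f : Fin k → Fin m) (x y : Fin m) : Prop :=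
  ∃ u v, H.Adj u v ∧ f u = x ∧ f v = y

/-- Inclusion of the second vertex set into `Fin (k₁ + k₂)`, redirecting the vertex `b`
to the vertex `a` of the first vertex set. -/
def vRedirect {k₁ k₂ : ℕ} (a : Fin k₁) (b : Fin k₂) : Fin k₂ → Fin (k₁ + k₂) :=
  fun v => if v = b then Fin.castAdd k₂ a else Fin.natAdd k₁ v

/-- The vertex join `H₁ ⊕_{a,b} H₂`, realized on `Fin (k₁ + k₂)` with one extra isolated
vertex (which changes neither homomorphism densities nor, for large host graphs, the
normalized injective homomorphism counts). -/
def vertexJoinGraph {k₁ k₂ : ℕ} (H₁ : SimpleGraph (Fin k₁)) (H₂ : SimpleGraph (Fin k₂))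
    (a : Fin k₁) (b : Fin k₂) : SimpleGraph (Fin (k₁ + k₂)) where
  Adj x y := x ≠ y ∧ (mappedAdj H₁ (Fin.castAdd k₂) x y ∨ mappedAdj H₂ (vRedirect a b) x y)
  symm := by
    refine ⟨?_⟩
    rintro x y ⟨hxy, h⟩
    refine ⟨hxy.symm, ?_⟩
    rcases h with ⟨u, v, huv, hu, hv⟩ | ⟨u, v, huv, hu, hv⟩
    · exact Or.inl ⟨v, u, huv.symm, hv, hu⟩
    · exact Or.inr ⟨v, u, huv.symm, hv, hu⟩
  loopless := ⟨fun x h => h.1 rfl⟩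

/-- The centered Gaussian law on `ℝ` with variance `v` (the Dirac mass at `0` if `v ≤ 0`). -/
noncomputable def gaussianLimit (v : ℝ) : Measure ℝ :=
  ProbabilityTheory.gaussianReal 0 v.toNNReal

/-- Convergence in distribution (weak convergence of laws) of real statistics of the
`W`-random graphs towards the law `ν`. -/
def TendstoInDist (X : (n : ℕ) → GraphonSpace n → ℝ) (ν : Measure ℝ) : Prop :=
  ∀ f : BoundedContinuousFunction ℝ ℝ,
    Filter.Tendsto (fun n => ∫ ω, f (X n ω) ∂(graphonMeasure n))
      Filter.atTop (nhds (∫ x, f x ∂ν))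

/-- The 2-point conditional kernel `W_H(x,y)`. -/
noncomputable def condKernel {k : ℕ} (H : SimpleGraph (Fin k)) (W : ℝ → ℝ → ℝ)
    (x y : ℝ) : ℝ :=
  (∑ a : Fin k, ∑ b : Fin k, if a ≠ b then homDensity2 H W a b x y else 0)
    / (2 * (autCard H : ℝ))

/-- The cut norm `‖U‖_□` of a kernel on `[0,1]²`. -/
noncomputable def cutNorm (U : ℝ → ℝ → ℝ) : ℝ :=
  ⨆ fg : {f : ℝ → ℝ // Measurable f ∧ ∀ x, f x ∈ Set.Icc (0 : ℝ) 1} ×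
      {g : ℝ → ℝ // Measurable g ∧ ∀ x, g x ∈ Set.Icc (0 : ℝ) 1},
    |∫ x, ∫ y, U x y * fg.1.1 x * fg.2.1 y ∂mu01 ∂mu01|

open MeasureTheory

instance pimeas_prob (k : ℕ) : IsProbabilityMeasure (pimeas k) := by
  unfold pimeas; infer_instance

namespace StmtAux

lemma mem01_mul {a b : ℝ} (ha : a ∈ Set.Icc (0:ℝ) 1) (hb : b ∈ Set.Icc (0:ℝ) 1) :
    a * b ∈ Set.Icc (0:ℝ) 1 :=
  ⟨mul_nonneg ha.1 hb.1, mul_le_one₀ ha.2 hb.1 hb.2⟩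

lemma mem01_prod {ι : Type*} {s : Finset ι} {f : ι → ℝ} (h : ∀ i ∈ s, f i ∈ Set.Icc (0:ℝ) 1) :
    (∏ i ∈ s, f i) ∈ Set.Icc (0:ℝ) 1 :=
  Finset.prod_induction f _ (fun _ _ => mem01_mul) ⟨zero_le_one, le_refl 1⟩ h

lemma abs_le_one_of_mem01 {a : ℝ} (h : a ∈ Set.Icc (0:ℝ) 1) : |a| ≤ 1 := by
  rw [abs_le]; exact ⟨by linarith [h.1], h.2⟩

lemma integrable_bdd {α : Type*} [MeasurableSpace α] {ν : Measure α} [IsFiniteMeasure ν]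
    {f : α → ℝ} {c : ℝ} (hm : AEStronglyMeasurable f ν) (hb : ∀ x, |f x| ≤ c) :
    Integrable f ν := by
  refine (integrable_const c).mono' hm (Filter.Eventually.of_forall fun x => ?_)
  simpa using hb x

lemma abs_integral_le_of_bound {α : Type*} [MeasurableSpace α] (ν : Measure α)
    [IsProbabilityMeasure ν] {f : α → ℝ} {c : ℝ} (hb : ∀ x, |f x| ≤ c) :
    |∫ x, f x ∂ν| ≤ c := by
  have := norm_integral_le_of_norm_le_const (μ := ν) (f := f) (C := c)
    (Filter.Eventually.of_forall fun x => by simpa using hb x)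
  simpa using this

lemma meas_apply2 {γ : Type*} [MeasurableSpace γ] {W : ℝ → ℝ → ℝ}
    (hW : Measurable (Function.uncurry W)) {f g : γ → ℝ}
    (hf : Measurable f) (hg : Measurable g) : Measurable fun x => W (f x) (g x) :=
  hW.comp (hf.prodMk hg)

end StmtAux

namespace StmtAux

lemma measurable_updT {k : ℕ} (i : Fin k) :
    Measurable (fun p : ℝ × (Fin k → ℝ) => Function.update p.2 i p.1) :=
  measurable_update'.comp (measurable_snd.prodMk measurable_fst)

lemma measurePreserving_updT (k : ℕ) (i : Fin k) :
    MeasurePreserving (fun p : ℝ × (Fin k → ℝ) => Function.update p.2 i p.1)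
      (mu01.prod (pimeas k)) (pimeas k) := by
  refine ⟨measurable_updT i, ?_⟩
  show _ = pimeas k
  unfold pimeas
  refine (Measure.pi_eq fun s hs => ?_).symm
  rw [Measure.map_apply (measurable_updT i) (MeasurableSet.univ_pi hs)]
  have hpre : (fun p : ℝ × (Fin k → ℝ) => Function.update p.2 i p.1) ⁻¹' (Set.univ.pi s)
      = (s i) ×ˢ (Set.univ.pi (Function.update s i Set.univ)) := by
    ext ⟨t, z⟩
    simp only [Set.mem_preimage, Set.mem_pi, Set.mem_univ, forall_true_left, Set.mem_prod]
    constructor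
    · intro h
      refine ⟨by simpa using h i, fun j => ?_⟩
      rcases eq_or_ne j i with rfl | hj
      · simp
      · have := h j
        rw [Function.update_of_ne hj] at this
        rwa [Function.update_of_ne hj]
    · rintro ⟨h1, h2⟩ j
      rcases eq_or_ne j i with rfl | hj'
      · simpa using h1
      · have := h2 j
        rw [Function.update_of_ne hj'] at this
        rwa [Function.update_of_ne hj']
  rw [hpre]
  have hms : MeasurableSet (Set.univ.pi (Function.update s i Set.univ)) := by
    refine MeasurableSet.univ_pi fun j => ?_
    rcases eq_or_ne j i with rfl | hj
    · simp
    · rw [Function.update_of_ne hj]; exact hs j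
  show (mu01.prod (Measure.pi fun _ => mu01)) _ = _
  rw [Measure.prod_prod, Measure.pi_pi]
  have h1 : (∏ j : Fin k, mu01 (Function.update s i Set.univ j))
      = ∏ j ∈ Finset.univ.erase i, mu01 (s j) := by
    have : ∀ j, mu01 (Function.update s i Set.univ j)
        = Function.update (fun j => mu01 (s j)) i (mu01 Set.univ) j := fun j =>
      Function.apply_update (fun _ t => mu01 t) s i Set.univ j
    simp_rw [this]
    rw [Finset.prod_update_of_mem (Finset.mem_univ i)]
    rw [measure_univ, one_mul]
    congr 1
    ext j
    simp [Finset.mem_erase, and_comm]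
  rw [h1]
  exact Finset.mul_prod_erase Finset.univ (fun j => mu01 (s j)) (Finset.mem_univ i)

/-- Integrating out one coordinate of the product measure. -/
lemma integral_update {k : ℕ} (i : Fin k) {Φ : (Fin k → ℝ) → ℝ}
    (hm : Measurable Φ) (hb : ∀ z, |Φ z| ≤ 1) :
    ∫ z, Φ z ∂(pimeas k) = ∫ z, ∫ t, Φ (Function.update z i t) ∂mu01 ∂(pimeas k) := by
  have hmp := measurePreserving_updT k i
  have h1 : ∫ z, Φ z ∂(pimeas k)
      = ∫ p : ℝ × (Fin k → ℝ), Φ (Function.update p.2 i p.1) ∂(mu01.prod (pimeas k)) := by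
    rw [← hmp.map_eq, integral_map (measurable_updT i).aemeasurable]
    rw [hmp.map_eq]
    exact hm.aestronglyMeasurable
  have hint : Integrable (fun p : ℝ × (Fin k → ℝ) => Φ (Function.update p.2 i p.1))
      (mu01.prod (pimeas k)) :=
    integrable_bdd ((hm.comp (measurable_updT i)).aestronglyMeasurable) (fun p => hb _)
  rw [h1, MeasureTheory.integral_prod _ hint]
  exact integral_integral_swap (f := fun t z => Φ (Function.update z i t)) hint

end StmtAux

namespace StmtAux

lemma split {k : ℕ} (α : Fin k → ℝ → ℝ)
    (hαm : ∀ e, Measurable (α e)) (hα1 : ∀ e x, α e x ∈ Set.Icc (0:ℝ) 1)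
    (Δ : ℝ → ℝ → ℝ) (hΔm : Measurable (Function.uncurry Δ)) (hΔb : ∀ u v, |Δ u v| ≤ 1)
    (κ : ℝ)
    (hκ : ∀ F G : ℝ → ℝ, Measurable F → (∀ x, F x ∈ Set.Icc (0:ℝ) 1) →
      Measurable G → (∀ x, G x ∈ Set.Icc (0:ℝ) 1) →
      |∫ u, ∫ v, Δ u v * F u * G v ∂mu01 ∂mu01| ≤ κ)
    (t : Finset (Fin k × Fin k)) (C : Fin k × Fin k → ℝ → ℝ → ℝ)
    (hC : ∀ q ∈ t, Measurable (Function.uncurry (C q)) ∧ ∀ u v, C q u v ∈ Set.Icc (0:ℝ) 1)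
    (ht : ∀ q ∈ t, q.1 < q.2) (p : Fin k × Fin k) (hp : p.1 < p.2) (hpt : p ∉ t) :
    |∫ z, (∏ e, α e (z e)) * (∏ q ∈ t, C q (z q.1) (z q.2)) * Δ (z p.1) (z p.2) ∂(pimeas k)|
      ≤ κ := by
  have hcd : p.1 ≠ p.2 := ne_of_lt hp
  -- basic measurability / bounds
  have mα : Measurable (fun z : Fin k → ℝ => ∏ e, α e (z e)) :=
    Finset.measurable_prod _ fun e _ => (hαm e).comp (measurable_pi_apply e)
  have bα : ∀ z : Fin k → ℝ, (∏ e, α e (z e)) ∈ Set.Icc (0:ℝ) 1 :=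
    fun z => mem01_prod fun e _ => hα1 e _
  have mC : Measurable (fun z : Fin k → ℝ => ∏ q ∈ t, C q (z q.1) (z q.2)) :=
    Finset.measurable_prod _ fun q hq =>
      meas_apply2 (hC q hq).1 (measurable_pi_apply q.1) (measurable_pi_apply q.2)
  have bC : ∀ z : Fin k → ℝ, (∏ q ∈ t, C q (z q.1) (z q.2)) ∈ Set.Icc (0:ℝ) 1 :=
    fun z => mem01_prod fun q hq => (hC q hq).2 _ _
  set Φ : (Fin k → ℝ) → ℝ :=
    fun z => (∏ e, α e (z e)) * (∏ q ∈ t, C q (z q.1) (z q.2)) * Δ (z p.1) (z p.2) with hΦdef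
  have hΦm : Measurable Φ :=
    (mα.mul mC).mul (meas_apply2 hΔm (measurable_pi_apply p.1) (measurable_pi_apply p.2))
  have hΦb : ∀ z, |Φ z| ≤ 1 := by
    intro z
    rw [hΦdef]
    simp only [abs_mul]
    have h1 := abs_le_one_of_mem01 (bα z)
    have h2 := abs_le_one_of_mem01 (bC z)
    have h3 := hΔb (z p.1) (z p.2)
    have n2 := abs_nonneg ((∏ q ∈ t, C q (z q.1) (z q.2)))
    have n3 := abs_nonneg (Δ (z p.1) (z p.2))
    exact mul_le_one₀ (mul_le_one₀ h1 n2 h2) n3 h3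
  set Ψ : (Fin k → ℝ) → ℝ := fun z => ∫ v, Φ (Function.update z p.2 v) ∂mu01 with hΨdef
  have hΨm : Measurable Ψ := by
    have : StronglyMeasurable fun q : (Fin k → ℝ) × ℝ => Φ (Function.update q.1 p.2 q.2) :=
      (hΦm.comp measurable_update').stronglyMeasurable
    exact this.integral_prod_right'.measurable
  have hΨb : ∀ z, |Ψ z| ≤ 1 := fun z => abs_integral_le_of_bound mu01 (fun v => hΦb _)
  have e1 : ∫ z, Φ z ∂(pimeas k) = ∫ z, Ψ z ∂(pimeas k) := integral_update p.2 hΦm hΦb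
  have e2 : ∫ z, Ψ z ∂(pimeas k)
      = ∫ z, ∫ u, Ψ (Function.update z p.1 u) ∂mu01 ∂(pimeas k) :=
    integral_update p.1 hΨm hΨb
  have claim : ∀ z : Fin k → ℝ, |∫ u, Ψ (Function.update z p.1 u) ∂mu01| ≤ κ := by
    intro z
    classical
    set F : ℝ → ℝ := fun u => α p.1 u *
      ∏ q ∈ t.filter (fun q => q.1 = p.1 ∨ q.2 = p.1),
        C q (Function.update z p.1 u q.1) (Function.update z p.1 u q.2) with hFdef
    set G : ℝ → ℝ := fun v => α p.2 v *
      (∏ q ∈ (t.filter (fun q => ¬(q.1 = p.1 ∨ q.2 = p.1))).filter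
          (fun q => q.1 = p.2 ∨ q.2 = p.2),
        C q (Function.update z p.2 v q.1) (Function.update z p.2 v q.2)) *
      ((∏ e ∈ (Finset.univ.erase p.1).erase p.2, α e (z e)) *
       ∏ q ∈ (t.filter (fun q => ¬(q.1 = p.1 ∨ q.2 = p.1))).filter
          (fun q => ¬(q.1 = p.2 ∨ q.2 = p.2)),
        C q (z q.1) (z q.2)) with hGdef
    have hFm : Measurable F := by
      refine (hαm p.1).mul (Finset.measurable_prod _ fun q hq => ?_)
      have h1 : Measurable fun u : ℝ => Function.update z p.1 u q.1 :=
        (measurable_pi_apply q.1).comp (measurable_update z)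
      have h2 : Measurable fun u : ℝ => Function.update z p.1 u q.2 :=
        (measurable_pi_apply q.2).comp (measurable_update z)
      exact meas_apply2 (hC q (Finset.mem_filter.1 hq).1).1 h1 h2
    have hF1 : ∀ u, F u ∈ Set.Icc (0:ℝ) 1 := fun u =>
      mem01_mul (hα1 _ _) (mem01_prod fun q hq => (hC q (Finset.mem_filter.1 hq).1).2 _ _)
    have hGm : Measurable G := by
      refine (((hαm p.2).mul (Finset.measurable_prod _ fun q hq => ?_)).mul measurable_const)
      have h1 : Measurable fun v : ℝ => Function.update z p.2 v q.1 :=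
        (measurable_pi_apply q.1).comp (measurable_update z)
      have h2 : Measurable fun v : ℝ => Function.update z p.2 v q.2 :=
        (measurable_pi_apply q.2).comp (measurable_update z)
      exact meas_apply2 (hC q (Finset.mem_filter.1 (Finset.mem_filter.1 hq).1).1).1 h1 h2
    have hG1 : ∀ v, G v ∈ Set.Icc (0:ℝ) 1 := by
      intro v
      refine mem01_mul (mem01_mul (hα1 _ _) (mem01_prod fun q hq => ?_))
        (mem01_mul (mem01_prod fun e _ => hα1 e _) (mem01_prod fun q hq => ?_))
      · exact (hC q (Finset.mem_filter.1 (Finset.mem_filter.1 hq).1).1).2 _ _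
      · exact (hC q (Finset.mem_filter.1 (Finset.mem_filter.1 hq).1).1).2 _ _
    have key : ∀ u v,
        Φ (Function.update (Function.update z p.1 u) p.2 v) = Δ u v * F u * G v := by
      intro u v
      set w := Function.update (Function.update z p.1 u) p.2 v with hwdef
      have hwc : w p.1 = u := by
        rw [hwdef, Function.update_of_ne hcd, Function.update_self]
      have hwd : w p.2 = v := by rw [hwdef, Function.update_self]
      have hw1 : ∀ j, j ≠ p.2 → w j = Function.update z p.1 u j := by
        intro j hj; rw [hwdef, Function.update_of_ne hj]
      have hw2 : ∀ j, j ≠ p.1 → w j = Function.update z p.2 v j := by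
        intro j hj
        rcases eq_or_ne j p.2 with rfl | hjd
        · rw [hwd, Function.update_self]
        · rw [hw1 j hjd, Function.update_of_ne hj, Function.update_of_ne hjd]
      have hw0 : ∀ j, j ≠ p.1 → j ≠ p.2 → w j = z j := by
        intro j hj1 hj2
        rw [hw1 j hj2, Function.update_of_ne hj1]
      -- touching facts for q ∈ t
      have htouch : ∀ q ∈ t, (q.1 = p.1 ∨ q.2 = p.1) → q.1 ≠ p.2 ∧ q.2 ≠ p.2 := by
        intro q hq hqc
        rcases hqc with h | h
        · constructor
          · rw [h]; exact hcd
          · intro h2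
            exact hpt (by rwa [← Prod.mk.eta (p := q), h, h2] at hq)
        · constructor
          · intro h1
            exact absurd (h1 ▸ (ht q hq)) (by rw [h]; exact not_lt.2 (le_of_lt hp))
          · rw [h]; exact hcd
      -- α product split
      have hαsplit : (∏ e, α e (w e))
          = α p.1 u * (α p.2 v * ∏ e ∈ (Finset.univ.erase p.1).erase p.2, α e (z e)) := by
        rw [← Finset.mul_prod_erase Finset.univ (fun e => α e (w e)) (Finset.mem_univ p.1)]
        rw [← Finset.mul_prod_erase (Finset.univ.erase p.1) (fun e => α e (w e))
          (Finset.mem_erase.2 ⟨hcd.symm, Finset.mem_univ p.2⟩)]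
        rw [hwc, hwd]
        congr 1
        congr 1
        refine Finset.prod_congr rfl fun e he => ?_
        have he2 := Finset.mem_erase.1 he
        have he1 := Finset.mem_erase.1 he2.2
        rw [hw0 e he1.1 he2.1]
      -- C product split
      have hCsplit : (∏ q ∈ t, C q (w q.1) (w q.2))
          = (∏ q ∈ t.filter (fun q => q.1 = p.1 ∨ q.2 = p.1),
              C q (Function.update z p.1 u q.1) (Function.update z p.1 u q.2)) *
            ((∏ q ∈ (t.filter (fun q => ¬(q.1 = p.1 ∨ q.2 = p.1))).filter
                (fun q => q.1 = p.2 ∨ q.2 = p.2),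
              C q (Function.update z p.2 v q.1) (Function.update z p.2 v q.2)) *
             ∏ q ∈ (t.filter (fun q => ¬(q.1 = p.1 ∨ q.2 = p.1))).filter
                (fun q => ¬(q.1 = p.2 ∨ q.2 = p.2)),
              C q (z q.1) (z q.2)) := by
        rw [← Finset.prod_filter_mul_prod_filter_not t (fun q => q.1 = p.1 ∨ q.2 = p.1)
          (fun q => C q (w q.1) (w q.2))]
        congr 1
        · refine Finset.prod_congr rfl fun q hq => ?_
          have hq' := Finset.mem_filter.1 hq
          have h := htouch q hq'.1 hq'.2
          rw [hw1 q.1 h.1, hw1 q.2 h.2]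
        · rw [← Finset.prod_filter_mul_prod_filter_not
            (t.filter (fun q => ¬(q.1 = p.1 ∨ q.2 = p.1))) (fun q => q.1 = p.2 ∨ q.2 = p.2)
            (fun q => C q (w q.1) (w q.2))]
          congr 1
          · refine Finset.prod_congr rfl fun q hq => ?_
            have hq' := Finset.mem_filter.1 (Finset.mem_filter.1 hq).1
            have hnc := not_or.1 hq'.2
            rw [hw2 q.1 hnc.1, hw2 q.2 hnc.2]
          · refine Finset.prod_congr rfl fun q hq => ?_
            have hq1 := Finset.mem_filter.1 hq
            have hq' := Finset.mem_filter.1 hq1.1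
            have hnc := not_or.1 hq'.2
            have hnd := not_or.1 hq1.2
            rw [hw0 q.1 hnc.1 hnd.1, hw0 q.2 hnc.2 hnd.2]
      rw [hΦdef]
      show (∏ e, α e (w e)) * (∏ q ∈ t, C q (w q.1) (w q.2)) * Δ (w p.1) (w p.2)
        = Δ u v * F u * G v
      rw [hαsplit, hCsplit, hwc, hwd, hFdef, hGdef]
      ring
    have : ∫ u, Ψ (Function.update z p.1 u) ∂mu01
        = ∫ u, ∫ v, Δ u v * F u * G v ∂mu01 ∂mu01 := by
      rw [hΨdef]
      simp only
      congr 1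
      funext u
      congr 1
      funext v
      exact key u v
    rw [this]
    exact hκ F G hFm hF1 hGm hG1
  calc |∫ z, Φ z ∂(pimeas k)|
      = |∫ z, ∫ u, Ψ (Function.update z p.1 u) ∂mu01 ∂(pimeas k)| := by rw [e1, e2]
    _ ≤ κ := abs_integral_le_of_bound (pimeas k) claim

end StmtAux

namespace StmtAux

lemma core {k : ℕ} (A B : ℝ → ℝ → ℝ)
    (hAm : Measurable (Function.uncurry A)) (hA1 : ∀ u v, A u v ∈ Set.Icc (0:ℝ) 1)
    (hBm : Measurable (Function.uncurry B)) (hB1 : ∀ u v, B u v ∈ Set.Icc (0:ℝ) 1)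
    (α : Fin k → ℝ → ℝ)
    (hαm : ∀ e, Measurable (α e)) (hα1 : ∀ e x, α e x ∈ Set.Icc (0:ℝ) 1)
    (κ : ℝ)
    (hκ : ∀ F G : ℝ → ℝ, Measurable F → (∀ x, F x ∈ Set.Icc (0:ℝ) 1) →
      Measurable G → (∀ x, G x ∈ Set.Icc (0:ℝ) 1) →
      |∫ u, ∫ v, (A u v - B u v) * F u * G v ∂mu01 ∂mu01| ≤ κ)
    (s : Finset (Fin k × Fin k)) :
    ∀ t : Finset (Fin k × Fin k), Disjoint s t →
    (∀ q ∈ s, q.1 < q.2) → (∀ q ∈ t, q.1 < q.2) →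
    ∀ C : Fin k × Fin k → ℝ → ℝ → ℝ,
    (∀ q ∈ t, Measurable (Function.uncurry (C q)) ∧ ∀ u v, C q u v ∈ Set.Icc (0:ℝ) 1) →
    |∫ z, (∏ e, α e (z e)) * (∏ q ∈ t, C q (z q.1) (z q.2)) *
        (∏ q ∈ s, A (z q.1) (z q.2)) ∂(pimeas k)
      - ∫ z, (∏ e, α e (z e)) * (∏ q ∈ t, C q (z q.1) (z q.2)) *
        (∏ q ∈ s, B (z q.1) (z q.2)) ∂(pimeas k)|
      ≤ s.card * κ := by
  have hκ0 : 0 ≤ κ := by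
    have h := hκ (fun _ => 0) (fun _ => 0) measurable_const
      (fun _ => ⟨le_refl 0, zero_le_one⟩) measurable_const (fun _ => ⟨le_refl 0, zero_le_one⟩)
    exact le_trans (abs_nonneg _) h
  -- generic measurability/bound helpers
  have mα : Measurable (fun z : Fin k → ℝ => ∏ e, α e (z e)) :=
    Finset.measurable_prod _ fun e _ => (hαm e).comp (measurable_pi_apply e)
  have bα : ∀ z : Fin k → ℝ, (∏ e, α e (z e)) ∈ Set.Icc (0:ℝ) 1 :=
    fun z => mem01_prod fun e _ => hα1 e _
  have mEdge : ∀ (t : Finset (Fin k × Fin k)) (C : Fin k × Fin k → ℝ → ℝ → ℝ),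
      (∀ q ∈ t, Measurable (Function.uncurry (C q))) →
      Measurable (fun z : Fin k → ℝ => ∏ q ∈ t, C q (z q.1) (z q.2)) := fun t C hC =>
    Finset.measurable_prod _ fun q hq =>
      meas_apply2 (hC q hq) (measurable_pi_apply q.1) (measurable_pi_apply q.2)
  have bEdge : ∀ (t : Finset (Fin k × Fin k)) (C : Fin k × Fin k → ℝ → ℝ → ℝ),
      (∀ q ∈ t, ∀ u v, C q u v ∈ Set.Icc (0:ℝ) 1) → ∀ z : Fin k → ℝ,
      (∏ q ∈ t, C q (z q.1) (z q.2)) ∈ Set.Icc (0:ℝ) 1 := fun t C hC z =>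
    mem01_prod fun q hq => hC q hq _ _
  have intP : ∀ (t : Finset (Fin k × Fin k)) (C : Fin k × Fin k → ℝ → ℝ → ℝ),
      (∀ q ∈ t, Measurable (Function.uncurry (C q)) ∧ ∀ u v, C q u v ∈ Set.Icc (0:ℝ) 1) →
      ∀ (s : Finset (Fin k × Fin k)) (K : ℝ → ℝ → ℝ), Measurable (Function.uncurry K) →
      (∀ u v, K u v ∈ Set.Icc (0:ℝ) 1) →
      Integrable (fun z : Fin k → ℝ => (∏ e, α e (z e)) * (∏ q ∈ t, C q (z q.1) (z q.2)) *
        (∏ q ∈ s, K (z q.1) (z q.2))) (pimeas k) := by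
    intro t C hC s K hKm hK1
    refine integrable_bdd (c := 1) (((mα.mul (mEdge t C fun q hq => (hC q hq).1)).mul
      (mEdge s (fun _ => K) fun q _ => hKm)).aestronglyMeasurable) (fun z => ?_)
    exact abs_le_one_of_mem01 (mem01_mul (mem01_mul (bα z)
      (bEdge t C (fun q hq => (hC q hq).2) z)) (bEdge s (fun _ => K) (fun q _ => hK1) z))
  induction s using Finset.induction_on with
  | empty =>
    intro t _ _ _ C _
    simp
  | @insert p s hps ih =>
    intro t hdisj hs ht C hC
    have hpt : p ∉ t := (Finset.disjoint_insert_left.1 hdisj).1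
    have hst : Disjoint s t := (Finset.disjoint_insert_left.1 hdisj).2
    have hp : p.1 < p.2 := hs p (Finset.mem_insert_self p s)
    have hs' : ∀ q ∈ s, q.1 < q.2 := fun q hq => hs q (Finset.mem_insert_of_mem hq)
    -- middle integrand: B at p, A on s
    set C'' : Fin k × Fin k → ℝ → ℝ → ℝ := fun q => if q = p then B else C q with hC''def
    have hC'' : ∀ q ∈ insert p t,
        Measurable (Function.uncurry (C'' q)) ∧ ∀ u v, C'' q u v ∈ Set.Icc (0:ℝ) 1 := by
      intro q hq
      rw [hC''def]
      rcases eq_or_ne q p with rfl | hqp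
      · simp only [if_pos rfl]; exact ⟨hBm, hB1⟩
      · simp only [if_neg hqp]
        exact hC q ((Finset.mem_insert.1 hq).resolve_left hqp)
    have htins : ∀ q ∈ insert p t, q.1 < q.2 := by
      intro q hq
      rcases Finset.mem_insert.1 hq with rfl | hq'
      · exact hp
      · exact ht q hq'
    have hdisj' : Disjoint s (insert p t) :=
      Finset.disjoint_insert_right.2 ⟨hps, hst⟩
    have ihm := ih (insert p t) hdisj' hs' htins C'' hC''
    -- the three integrals
    set I₁ := ∫ z, (∏ e, α e (z e)) * (∏ q ∈ t, C q (z q.1) (z q.2)) *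
        (∏ q ∈ insert p s, A (z q.1) (z q.2)) ∂(pimeas k) with hI₁
    set I₂ := ∫ z, (∏ e, α e (z e)) * (∏ q ∈ t, C q (z q.1) (z q.2)) *
        (∏ q ∈ insert p s, B (z q.1) (z q.2)) ∂(pimeas k) with hI₂
    set Im := ∫ z, (∏ e, α e (z e)) * (∏ q ∈ insert p t, C'' q (z q.1) (z q.2)) *
        (∏ q ∈ s, A (z q.1) (z q.2)) ∂(pimeas k) with hIm
    set Im₂ := ∫ z, (∏ e, α e (z e)) * (∏ q ∈ insert p t, C'' q (z q.1) (z q.2)) *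
        (∏ q ∈ s, B (z q.1) (z q.2)) ∂(pimeas k) with hIm₂
    -- pointwise rewriting of the middle-products
    have hmidprod : ∀ z : Fin k → ℝ,
        (∏ q ∈ insert p t, C'' q (z q.1) (z q.2)) = B (z p.1) (z p.2) *
          ∏ q ∈ t, C q (z q.1) (z q.2) := by
      intro z
      rw [Finset.prod_insert hpt]
      congr 1
      · rw [hC''def]; simp
      · refine Finset.prod_congr rfl fun q hq => ?_
        have hqp : q ≠ p := fun h => hpt (h ▸ hq)
        rw [hC''def]
        simp only [if_neg hqp]
    have hIm₂eq : Im₂ = I₂ := by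
      rw [hIm₂, hI₂]
      congr 1
      funext z
      rw [hmidprod z, Finset.prod_insert hps]
      ring
    -- first difference: the split bound
    have hfirst : |I₁ - Im| ≤ κ := by
      have hint1 := intP t C hC (insert p s) A hAm hA1
      have hintm : Integrable (fun z : Fin k → ℝ => (∏ e, α e (z e)) *
          (∏ q ∈ insert p t, C'' q (z q.1) (z q.2)) *
          (∏ q ∈ s, A (z q.1) (z q.2))) (pimeas k) :=
        intP (insert p t) C'' hC'' s A hAm hA1
      rw [hI₁, hIm, ← integral_sub hint1 hintm]
      -- pointwise equality with split's shape
      set C' : Fin k × Fin k → ℝ → ℝ → ℝ := fun q => if q ∈ t then C q else A with hC'def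
      have hC' : ∀ q ∈ t ∪ s,
          Measurable (Function.uncurry (C' q)) ∧ ∀ u v, C' q u v ∈ Set.Icc (0:ℝ) 1 := by
        intro q _
        rw [hC'def]
        by_cases hq : q ∈ t
        · simp only [if_pos hq]; exact hC q hq
        · simp only [if_neg hq]; exact ⟨hAm, hA1⟩
      have hts : ∀ q ∈ t ∪ s, q.1 < q.2 := by
        intro q hq
        rcases Finset.mem_union.1 hq with h | h
        · exact ht q h
        · exact hs' q h
      have hpts : p ∉ t ∪ s := by
        rw [Finset.mem_union]
        rintro (h | h)
        · exact hpt h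
        · exact hps h
      have hpw : ∀ z : Fin k → ℝ,
          ((∏ e, α e (z e)) * (∏ q ∈ t, C q (z q.1) (z q.2)) *
            (∏ q ∈ insert p s, A (z q.1) (z q.2)))
          - ((∏ e, α e (z e)) * (∏ q ∈ insert p t, C'' q (z q.1) (z q.2)) *
            (∏ q ∈ s, A (z q.1) (z q.2)))
          = (∏ e, α e (z e)) * (∏ q ∈ t ∪ s, C' q (z q.1) (z q.2)) *
            (A (z p.1) (z p.2) - B (z p.1) (z p.2)) := by
        intro z
        have h1 : (∏ q ∈ t ∪ s, C' q (z q.1) (z q.2))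
            = (∏ q ∈ t, C q (z q.1) (z q.2)) * (∏ q ∈ s, A (z q.1) (z q.2)) := by
          rw [Finset.prod_union hst.symm]
          congr 1
          · refine Finset.prod_congr rfl fun q hq => ?_
            rw [hC'def]; simp only [if_pos hq]
          · refine Finset.prod_congr rfl fun q hq => ?_
            have hqt : q ∉ t := Finset.disjoint_left.1 hst.symm.symm hq
            rw [hC'def]
            simp only [if_neg hqt]
        rw [h1, hmidprod z, Finset.prod_insert hps]
        ring
      have : (∫ z, (((∏ e, α e (z e)) * (∏ q ∈ t, C q (z q.1) (z q.2)) *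
            (∏ q ∈ insert p s, A (z q.1) (z q.2)))
          - ((∏ e, α e (z e)) * (∏ q ∈ insert p t, C'' q (z q.1) (z q.2)) *
            (∏ q ∈ s, A (z q.1) (z q.2)))) ∂(pimeas k))
          = ∫ z, (∏ e, α e (z e)) * (∏ q ∈ t ∪ s, C' q (z q.1) (z q.2)) *
            ((fun u v => A u v - B u v) (z p.1) (z p.2)) ∂(pimeas k) := by
        congr 1
        funext z
        exact hpw z
      rw [this]
      exact split α hαm hα1 (fun u v => A u v - B u v) (hAm.sub hBm)
        (fun u v => by
          have h1 := hA1 u v; have h2 := hB1 u v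
          rw [abs_le]
          constructor
          · show -1 ≤ A u v - B u v
            linarith [h1.1, h2.2]
          · show A u v - B u v ≤ 1
            linarith [h1.2, h2.1])
        κ hκ (t ∪ s) C' hC' hts p hp hpts
    calc |I₁ - I₂| = |(I₁ - Im) + (Im - Im₂)| := by rw [hIm₂eq] at *; ring_nf
      _ ≤ |I₁ - Im| + |Im - Im₂| := abs_add_le _ _
      _ ≤ κ + s.card * κ := add_le_add hfirst ihm
      _ = (insert p s).card * κ := by
        rw [Finset.card_insert_of_notMem hps]
        push_cast
        ring

end StmtAux

namespace StmtAux

lemma measurable_pairProd {m : ℕ} (R : Fin m → Fin m → Prop) {W : ℝ → ℝ → ℝ}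
    (hW : Measurable (Function.uncurry W)) : Measurable (pairProd R W) := by
  unfold pairProd
  refine Finset.measurable_prod _ fun p _ => ?_
  by_cases h : p.1 < p.2 ∧ R p.1 p.2
  · simp only [if_pos h]
    exact meas_apply2 hW (measurable_pi_apply p.1) (measurable_pi_apply p.2)
  · simp only [if_neg h]
    exact measurable_const

lemma pairProd_mem01 {m : ℕ} (R : Fin m → Fin m → Prop) {W : ℝ → ℝ → ℝ}
    (hW1 : ∀ u v, W u v ∈ Set.Icc (0:ℝ) 1) (z : Fin m → ℝ) :
    pairProd R W z ∈ Set.Icc (0:ℝ) 1 := by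
  unfold pairProd
  refine mem01_prod fun p _ => ?_
  by_cases h : p.1 < p.2 ∧ R p.1 p.2
  · simp only [if_pos h]; exact hW1 _ _
  · simp only [if_neg h]; exact ⟨zero_le_one, le_refl 1⟩

lemma pairProd_eq_filter {k : ℕ} (H : SimpleGraph (Fin k)) (W : ℝ → ℝ → ℝ) (z : Fin k → ℝ) :
    pairProd H.Adj W z
      = ∏ q ∈ Finset.univ.filter (fun p : Fin k × Fin k => p.1 < p.2 ∧ H.Adj p.1 p.2),
          W (z q.1) (z q.2) := by
  unfold pairProd
  rw [Finset.prod_filter]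

lemma measurable_homDensity2 {k : ℕ} (H : SimpleGraph (Fin k)) {W : ℝ → ℝ → ℝ}
    (hW : Measurable (Function.uncurry W)) (a b : Fin k) :
    Measurable fun q : ℝ × ℝ => homDensity2 H W a b q.1 q.2 := by
  have m1 : Measurable fun p : (ℝ × ℝ) × (Fin k → ℝ) => Function.update p.2 a p.1.1 :=
    measurable_update'.comp (measurable_snd.prodMk (measurable_fst.fst))
  have m2 : Measurable fun p : (ℝ × ℝ) × (Fin k → ℝ) =>
      Function.update (Function.update p.2 a p.1.1) b p.1.2 :=
    measurable_update'.comp (m1.prodMk measurable_fst.snd)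
  exact (((measurable_pairProd H.Adj hW).comp m2).stronglyMeasurable.integral_prod_right').measurable

lemma abs_homDensity2_le {k : ℕ} (H : SimpleGraph (Fin k)) {W : ℝ → ℝ → ℝ}
    (hW1 : ∀ u v, W u v ∈ Set.Icc (0:ℝ) 1) (a b : Fin k) (x y : ℝ) :
    |homDensity2 H W a b x y| ≤ 1 :=
  abs_integral_le_of_bound (pimeas k)
    (fun z => abs_le_one_of_mem01 (pairProd_mem01 H.Adj hW1 _))

lemma alpha_prod {k : ℕ} {a b : Fin k} (hab : a ≠ b) (f g : ℝ → ℝ) (z : Fin k → ℝ) :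
    (∏ e, (if e = a then f else if e = b then g else fun _ => (1:ℝ)) (z e))
      = f (z a) * g (z b) := by
  classical
  rw [← Finset.mul_prod_erase Finset.univ
    (fun e => (if e = a then f else if e = b then g else fun _ => (1:ℝ)) (z e))
    (Finset.mem_univ a)]
  rw [← Finset.mul_prod_erase (Finset.univ.erase a)
    (fun e => (if e = a then f else if e = b then g else fun _ => (1:ℝ)) (z e))
    (Finset.mem_erase.2 ⟨hab.symm, Finset.mem_univ b⟩)]
  have h1 : (if a = a then f else if a = b then g else fun _ => (1:ℝ)) = f := if_pos rfl
  have h2 : (if b = a then f else if b = b then g else fun _ => (1:ℝ)) = g := by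
    rw [if_neg hab.symm, if_pos rfl]
  rw [h1, h2]
  have h3 : ∀ e ∈ (Finset.univ.erase a).erase b,
      (if e = a then f else if e = b then g else fun _ => (1:ℝ)) (z e) = 1 := by
    intro e he
    have he2 := Finset.mem_erase.1 he
    have he1 := Finset.mem_erase.1 he2.2
    rw [if_neg he1.1, if_neg he2.1]
  rw [Finset.prod_congr rfl h3, Finset.prod_const_one]
  ring

lemma stepA {k : ℕ} (H : SimpleGraph (Fin k)) (W : ℝ → ℝ → ℝ)
    (hWm : Measurable (Function.uncurry W)) (hW1 : ∀ u v, W u v ∈ Set.Icc (0:ℝ) 1)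
    (a b : Fin k) (hab : a ≠ b) (f g : ℝ → ℝ)
    (hfm : Measurable f) (hf1 : ∀ x, f x ∈ Set.Icc (0:ℝ) 1)
    (hgm : Measurable g) (hg1 : ∀ x, g x ∈ Set.Icc (0:ℝ) 1) :
    ∫ x, ∫ y, homDensity2 H W a b x y * f x * g y ∂mu01 ∂mu01
      = ∫ z, f (z a) * g (z b) * pairProd H.Adj W z ∂(pimeas k) := by
  have mP : Measurable (pairProd H.Adj W) := measurable_pairProd H.Adj hWm
  have bP : ∀ z, pairProd H.Adj W z ∈ Set.Icc (0:ℝ) 1 := pairProd_mem01 H.Adj hW1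
  set Φ : (Fin k → ℝ) → ℝ := fun z => f (z a) * g (z b) * pairProd H.Adj W z with hΦdef
  have hΦm : Measurable Φ :=
    ((hfm.comp (measurable_pi_apply a)).mul (hgm.comp (measurable_pi_apply b))).mul mP
  have hΦb : ∀ z, |Φ z| ≤ 1 := by
    intro z
    exact abs_le_one_of_mem01 (mem01_mul (mem01_mul (hf1 _) (hg1 _)) (bP _))
  set Ψ : (Fin k → ℝ) → ℝ := fun z => ∫ t, Φ (Function.update z b t) ∂mu01 with hΨdef
  have hΨm : Measurable Ψ :=
    ((hΦm.comp measurable_update').stronglyMeasurable.integral_prod_right').measurable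
  have hΨb : ∀ z, |Ψ z| ≤ 1 := fun z => abs_integral_le_of_bound mu01 (fun t => hΦb _)
  have e1 : ∫ z, Φ z ∂(pimeas k) = ∫ z, Ψ z ∂(pimeas k) := integral_update b hΦm hΦb
  have e2 : ∫ z, Ψ z ∂(pimeas k)
      = ∫ z, ∫ s, Ψ (Function.update z a s) ∂mu01 ∂(pimeas k) := integral_update a hΨm hΨb
  -- the LHS as a triple integral
  set Q : ℝ → ℝ → (Fin k → ℝ) → ℝ := fun x y z =>
    pairProd H.Adj W (Function.update (Function.update z a x) b y) * (f x * g y) with hQdef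
  have bQ : ∀ x y z, |Q x y z| ≤ 1 := by
    intro x y z
    rw [hQdef]
    exact abs_le_one_of_mem01 (mem01_mul (bP _) (mem01_mul (hf1 _) (hg1 _)))
  have lhs1 : ∀ x y : ℝ, homDensity2 H W a b x y * f x * g y
      = ∫ z, Q x y z ∂(pimeas k) := by
    intro x y
    show (∫ z, pairProd H.Adj W (Function.update (Function.update z a x) b y) ∂(pimeas k))
        * f x * g y = _
    rw [mul_assoc]
    exact (integral_mul_const _ _).symm
  have sw1 : ∀ x : ℝ, ∫ y, ∫ z, Q x y z ∂(pimeas k) ∂mu01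
      = ∫ z, ∫ y, Q x y z ∂mu01 ∂(pimeas k) := by
    intro x
    refine integral_integral_swap ?_
    have hm : Measurable fun p : ℝ × (Fin k → ℝ) =>
        Function.update (Function.update p.2 a x) b p.1 := by
      have : Measurable fun p : ℝ × (Fin k → ℝ) => Function.update p.2 a x :=
        measurable_update_left.comp measurable_snd
      exact measurable_update'.comp (this.prodMk measurable_fst)
    refine integrable_bdd (c := 1) (((mP.comp hm).mul
      (measurable_const.mul (hgm.comp measurable_fst))).aestronglyMeasurable) ?_
    intro p
    exact bQ x p.1 p.2
  have mm2 : Measurable fun r : (ℝ × (Fin k → ℝ)) × ℝ =>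
      Function.update (Function.update r.1.2 a r.1.1) b r.2 := by
    have : Measurable fun r : (ℝ × (Fin k → ℝ)) × ℝ => Function.update r.1.2 a r.1.1 :=
      measurable_update'.comp ((measurable_fst.snd).prodMk measurable_fst.fst)
    exact measurable_update'.comp (this.prodMk measurable_snd)
  have mQjoint : Measurable fun r : (ℝ × (Fin k → ℝ)) × ℝ => Q r.1.1 r.2 r.1.2 :=
    (mP.comp mm2).mul ((hfm.comp measurable_fst.fst).mul (hgm.comp measurable_snd))
  have sw2 : ∫ x, ∫ z, ∫ y, Q x y z ∂mu01 ∂(pimeas k) ∂mu01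
      = ∫ z, ∫ x, ∫ y, Q x y z ∂mu01 ∂mu01 ∂(pimeas k) := by
    refine integral_integral_swap ?_
    refine integrable_bdd (c := 1)
      ((mQjoint.stronglyMeasurable.integral_prod_right').measurable.aestronglyMeasurable) ?_
    intro p
    exact abs_integral_le_of_bound mu01 (fun y => bQ p.1 y p.2)
  have key : ∀ z : Fin k → ℝ, ∀ s t : ℝ,
      Φ (Function.update (Function.update z a s) b t) = Q s t z := by
    intro z s t
    rw [hΦdef, hQdef]
    show f (Function.update (Function.update z a s) b t a)
        * g (Function.update (Function.update z a s) b t b)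
        * pairProd H.Adj W (Function.update (Function.update z a s) b t) = _
    rw [Function.update_self, Function.update_of_ne hab, Function.update_self]
    ring
  calc ∫ x, ∫ y, homDensity2 H W a b x y * f x * g y ∂mu01 ∂mu01
      = ∫ x, ∫ y, ∫ z, Q x y z ∂(pimeas k) ∂mu01 ∂mu01 := by
        congr 1; funext x; congr 1; funext y; exact lhs1 x y
    _ = ∫ x, ∫ z, ∫ y, Q x y z ∂mu01 ∂(pimeas k) ∂mu01 := by
        congr 1; funext x; exact sw1 x
    _ = ∫ z, ∫ x, ∫ y, Q x y z ∂mu01 ∂mu01 ∂(pimeas k) := sw2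
    _ = ∫ z, ∫ s, Ψ (Function.update z a s) ∂mu01 ∂(pimeas k) := by
        congr 1; funext z; congr 1; funext s
        rw [hΨdef]
        show _ = ∫ t, Φ (Function.update (Function.update z a s) b t) ∂mu01
        congr 1; funext t
        exact (key z s t).symm
    _ = ∫ z, Ψ z ∂(pimeas k) := e2.symm
    _ = ∫ z, Φ z ∂(pimeas k) := e1.symm
    _ = ∫ z, f (z a) * g (z b) * pairProd H.Adj W z ∂(pimeas k) := by rw [hΦdef]

end StmtAux

namespace StmtAux

lemma pair_bound {k : ℕ} (H : SimpleGraph (Fin k)) (W₁ W₂ : ℝ → ℝ → ℝ)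
    (h₁m : Measurable (Function.uncurry W₁)) (h₁b : ∀ u v, W₁ u v ∈ Set.Icc (0:ℝ) 1)
    (h₂m : Measurable (Function.uncurry W₂)) (h₂b : ∀ u v, W₂ u v ∈ Set.Icc (0:ℝ) 1)
    (a b : Fin k) (hab : a ≠ b) (f g : ℝ → ℝ)
    (hfm : Measurable f) (hf1 : ∀ x, f x ∈ Set.Icc (0:ℝ) 1)
    (hgm : Measurable g) (hg1 : ∀ x, g x ∈ Set.Icc (0:ℝ) 1)
    (κ : ℝ)
    (hκ : ∀ F G : ℝ → ℝ, Measurable F → (∀ x, F x ∈ Set.Icc (0:ℝ) 1) →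
      Measurable G → (∀ x, G x ∈ Set.Icc (0:ℝ) 1) →
      |∫ u, ∫ v, (W₁ u v - W₂ u v) * F u * G v ∂mu01 ∂mu01| ≤ κ) :
    |∫ x, ∫ y, (homDensity2 H W₁ a b x y - homDensity2 H W₂ a b x y) * f x * g y ∂mu01 ∂mu01|
      ≤ ((k * k : ℕ) : ℝ) * κ := by
  classical
  have hκ0 : 0 ≤ κ := by
    have h := hκ (fun _ => 0) (fun _ => 0) measurable_const
      (fun _ => ⟨le_refl 0, zero_le_one⟩) measurable_const (fun _ => ⟨le_refl 0, zero_le_one⟩)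
    exact le_trans (abs_nonneg _) h
  -- integrability helpers
  have inty : ∀ T : ℝ → ℝ → ℝ, Measurable (fun q : ℝ × ℝ => T q.1 q.2) →
      (∀ u v, |T u v| ≤ 1) → ∀ x : ℝ,
      Integrable (fun y => T x y * f x * g y) mu01 := by
    intro T hTm hTb x
    have hTy : Measurable fun y => T x y :=
      hTm.comp (measurable_const.prodMk measurable_id)
    refine integrable_bdd (c := 1) ((hTy.mul measurable_const).mul
        hgm).aestronglyMeasurable ?_
    intro y
    rw [abs_mul, abs_mul]
    exact mul_le_one₀ (mul_le_one₀ (hTb _ _) (abs_nonneg _) (abs_le_one_of_mem01 (hf1 x)))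
      (abs_nonneg _) (abs_le_one_of_mem01 (hg1 y))
  have intx : ∀ T : ℝ → ℝ → ℝ, Measurable (fun q : ℝ × ℝ => T q.1 q.2) →
      (∀ u v, |T u v| ≤ 1) →
      Integrable (fun x => ∫ y, T x y * f x * g y ∂mu01) mu01 := by
    intro T hTm hTb
    have hm : Measurable fun q : ℝ × ℝ => T q.1 q.2 * f q.1 * g q.2 :=
      ((hTm.mul (hfm.comp measurable_fst)).mul (hgm.comp measurable_snd))
    refine integrable_bdd (c := 1)
      (hm.stronglyMeasurable.integral_prod_right'.measurable.aestronglyMeasurable) ?_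
    intro x
    refine abs_integral_le_of_bound mu01 (fun y => ?_)
    rw [abs_mul, abs_mul]
    exact mul_le_one₀ (mul_le_one₀ (hTb _ _) (abs_nonneg _) (abs_le_one_of_mem01 (hf1 x)))
      (abs_nonneg _) (abs_le_one_of_mem01 (hg1 y))
  have mT₁ := measurable_homDensity2 H h₁m a b
  have mT₂ := measurable_homDensity2 H h₂m a b
  have bT₁ : ∀ u v : ℝ, |homDensity2 H W₁ a b u v| ≤ 1 :=
    fun u v => abs_homDensity2_le H h₁b a b u v
  have bT₂ : ∀ u v : ℝ, |homDensity2 H W₂ a b u v| ≤ 1 :=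
    fun u v => abs_homDensity2_le H h₂b a b u v
  -- split into two iterated integrals
  have e0 : ∫ x, ∫ y, (homDensity2 H W₁ a b x y - homDensity2 H W₂ a b x y)
        * f x * g y ∂mu01 ∂mu01
      = (∫ x, ∫ y, homDensity2 H W₁ a b x y * f x * g y ∂mu01 ∂mu01)
        - ∫ x, ∫ y, homDensity2 H W₂ a b x y * f x * g y ∂mu01 ∂mu01 := by
    have hpt : ∀ x : ℝ, ∫ y, (homDensity2 H W₁ a b x y - homDensity2 H W₂ a b x y)
          * f x * g y ∂mu01
        = (∫ y, homDensity2 H W₁ a b x y * f x * g y ∂mu01)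
          - ∫ y, homDensity2 H W₂ a b x y * f x * g y ∂mu01 := by
      intro x
      have : (fun y => (homDensity2 H W₁ a b x y - homDensity2 H W₂ a b x y) * f x * g y)
          = fun y => homDensity2 H W₁ a b x y * f x * g y
            - homDensity2 H W₂ a b x y * f x * g y := by
        funext y; ring
      rw [this]
      exact integral_sub (inty (homDensity2 H W₁ a b) mT₁ bT₁ x)
        (inty (homDensity2 H W₂ a b) mT₂ bT₂ x)
    calc ∫ x, ∫ y, (homDensity2 H W₁ a b x y - homDensity2 H W₂ a b x y)
            * f x * g y ∂mu01 ∂mu01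
        = ∫ x, ((∫ y, homDensity2 H W₁ a b x y * f x * g y ∂mu01)
            - ∫ y, homDensity2 H W₂ a b x y * f x * g y ∂mu01) ∂mu01 := by
          congr 1; funext x; exact hpt x
      _ = _ := integral_sub (intx (homDensity2 H W₁ a b) mT₁ bT₁)
        (intx (homDensity2 H W₂ a b) mT₂ bT₂)
  rw [e0, stepA H W₁ h₁m h₁b a b hab f g hfm hf1 hgm hg1,
    stepA H W₂ h₂m h₂b a b hab f g hfm hf1 hgm hg1]
  -- convert to the core shape
  set α : Fin k → ℝ → ℝ := fun e => if e = a then f else if e = b then g else fun _ => 1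
    with hαdef
  have hαm : ∀ e, Measurable (α e) := by
    intro e; rw [hαdef]
    by_cases h1 : e = a
    · simp only [if_pos h1]; exact hfm
    · simp only [if_neg h1]
      by_cases h2 : e = b
      · simp only [if_pos h2]; exact hgm
      · simp only [if_neg h2]; exact measurable_const
  have hα1 : ∀ e x, α e x ∈ Set.Icc (0:ℝ) 1 := by
    intro e x; rw [hαdef]
    by_cases h1 : e = a
    · simp only [if_pos h1]; exact hf1 x
    · simp only [if_neg h1]
      by_cases h2 : e = b
      · simp only [if_pos h2]; exact hg1 x
      · simp only [if_neg h2]; exact ⟨zero_le_one, le_refl 1⟩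
  set P : Finset (Fin k × Fin k) :=
    Finset.univ.filter (fun p : Fin k × Fin k => p.1 < p.2 ∧ H.Adj p.1 p.2) with hPdef
  set C0 : Fin k × Fin k → ℝ → ℝ → ℝ := fun _ _ _ => 1 with hC0def
  have conv : ∀ W : ℝ → ℝ → ℝ,
      (∫ z, f (z a) * g (z b) * pairProd H.Adj W z ∂(pimeas k))
      = ∫ z, (∏ e, α e (z e)) * (∏ q ∈ (∅ : Finset (Fin k × Fin k)), C0 q (z q.1) (z q.2)) *
          (∏ q ∈ P, W (z q.1) (z q.2)) ∂(pimeas k) := by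
    intro W
    congr 1
    funext z
    rw [hαdef]
    rw [alpha_prod hab f g z]
    rw [Finset.prod_empty, pairProd_eq_filter, hPdef]
    ring
  rw [conv W₁, conv W₂]
  have hsP : ∀ q ∈ P, q.1 < q.2 := by
    intro q hq
    rw [hPdef] at hq
    exact (Finset.mem_filter.1 hq).2.1
  have hcore := core W₁ W₂ h₁m h₁b h₂m h₂b α hαm hα1 κ hκ P ∅
    (Finset.disjoint_empty_right _) hsP (fun q hq => absurd hq (Finset.notMem_empty q))
    C0 (fun q hq => absurd hq (Finset.notMem_empty q))
  refine le_trans hcore ?_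
  refine mul_le_mul_of_nonneg_right ?_ hκ0
  have hcard : P.card ≤ k * k := by
    refine le_trans (Finset.card_filter_le _ _) ?_
    rw [Finset.card_univ, Fintype.card_prod, Fintype.card_fin]
  exact_mod_cast hcard

end StmtAux

namespace StmtAux

lemma autCard_pos {k : ℕ} (H : SimpleGraph (Fin k)) : 0 < autCard H := by
  unfold autCard
  refine Finset.card_pos.2 ⟨Equiv.refl _, ?_⟩
  simp

end StmtAux

open StmtAux in
/-- For every graph `H` on `k ≥ 2` vertices there is a constant `C` such
that the 2-point conditional kernel `W ↦ W_H` is `C`-Lipschitz in the cut norm over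
graphons. -/
theorem condKernel_cut_lipschitz {k : ℕ} (hk : 2 ≤ k) (H : SimpleGraph (Fin k)) :
    ∃ C : ℝ, ∀ W₁ W₂ : ℝ → ℝ → ℝ, IsGraphon W₁ → IsGraphon W₂ →
      cutNorm (fun x y => condKernel H W₁ x y - condKernel H W₂ x y)
        ≤ C * cutNorm (fun x y => W₁ x y - W₂ x y) := by
  classical
  refine ⟨((k * k * (k * k) : ℕ) : ℝ), ?_⟩
  intro W₁ W₂ h₁ h₂
  obtain ⟨h₁m, h₁s, h₁b⟩ := h₁
  obtain ⟨h₂m, h₂s, h₂b⟩ := h₂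
  haveI : Nonempty {f : ℝ → ℝ // Measurable f ∧ ∀ x, f x ∈ Set.Icc (0:ℝ) 1} :=
    ⟨⟨fun _ => 0, measurable_const, fun _ => ⟨le_refl 0, zero_le_one⟩⟩⟩
  have hD1 : ∀ u v, |W₁ u v - W₂ u v| ≤ 1 := by
    intro u v
    have q1 := h₁b u v; have q2 := h₂b u v
    rw [abs_le]
    exact ⟨by linarith [q1.1, q2.2], by linarith [q1.2, q2.1]⟩
  -- the key cut-norm bound hypothesis
  have hκle : ∀ F G : ℝ → ℝ, Measurable F → (∀ x, F x ∈ Set.Icc (0:ℝ) 1) →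
      Measurable G → (∀ x, G x ∈ Set.Icc (0:ℝ) 1) →
      |∫ u, ∫ v, (W₁ u v - W₂ u v) * F u * G v ∂mu01 ∂mu01|
        ≤ cutNorm (fun x y => W₁ x y - W₂ x y) := by
    intro F G hFm hF1 hGm hG1
    have hb : BddAbove (Set.range fun fg :
        {f : ℝ → ℝ // Measurable f ∧ ∀ x, f x ∈ Set.Icc (0:ℝ) 1} ×
        {g : ℝ → ℝ // Measurable g ∧ ∀ x, g x ∈ Set.Icc (0:ℝ) 1} =>
        |∫ x, ∫ y, (W₁ x y - W₂ x y) * fg.1.1 x * fg.2.1 y ∂mu01 ∂mu01|) := by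
      refine ⟨1, ?_⟩
      rintro r ⟨fg, rfl⟩
      refine abs_integral_le_of_bound mu01 (fun x => ?_)
      refine abs_integral_le_of_bound mu01 (fun y => ?_)
      rw [abs_mul, abs_mul]
      exact mul_le_one₀ (mul_le_one₀ (hD1 x y) (abs_nonneg _)
          (abs_le_one_of_mem01 (fg.1.2.2 x)))
        (abs_nonneg _) (abs_le_one_of_mem01 (fg.2.2.2 y))
    exact le_ciSup hb (⟨⟨F, hFm, hF1⟩, ⟨G, hGm, hG1⟩⟩ :
      {f : ℝ → ℝ // Measurable f ∧ ∀ x, f x ∈ Set.Icc (0:ℝ) 1} ×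
      {g : ℝ → ℝ // Measurable g ∧ ∀ x, g x ∈ Set.Icc (0:ℝ) 1})
  have hκ0 : 0 ≤ cutNorm (fun x y => W₁ x y - W₂ x y) := by
    have h := hκle (fun _ => 0) (fun _ => 0) measurable_const
      (fun _ => ⟨le_refl 0, zero_le_one⟩) measurable_const (fun _ => ⟨le_refl 0, zero_le_one⟩)
    exact le_trans (abs_nonneg _) h
  set κ := cutNorm (fun x y => W₁ x y - W₂ x y) with hκdef
  -- the constant A2
  set A2 : ℝ := 2 * (autCard H : ℝ) with hA2def
  have hA2 : 1 ≤ A2 := by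
    rw [hA2def]
    have h := autCard_pos H
    have : (1 : ℝ) ≤ (autCard H : ℝ) := by exact_mod_cast h
    linarith
  refine ciSup_le ?_
  rintro ⟨⟨f, hfm, hf1⟩, ⟨g, hgm, hg1⟩⟩
  show |∫ x, ∫ y, (condKernel H W₁ x y - condKernel H W₂ x y) * f x * g y ∂mu01 ∂mu01|
    ≤ _
  -- per-pair summands
  set V : Fin k × Fin k → ℝ → ℝ → ℝ := fun p x y =>
    (if p.1 ≠ p.2 then homDensity2 H W₁ p.1 p.2 x y - homDensity2 H W₂ p.1 p.2 x y else 0)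
      * f x * g y with hVdef
  have mV : ∀ p : Fin k × Fin k, Measurable (fun q : ℝ × ℝ => V p q.1 q.2) := by
    intro p
    rw [hVdef]
    by_cases h : p.1 ≠ p.2
    · simp only [if_pos h]
      exact (((measurable_homDensity2 H h₁m p.1 p.2).sub
        (measurable_homDensity2 H h₂m p.1 p.2)).mul (hfm.comp measurable_fst)).mul
        (hgm.comp measurable_snd)
    · simp only [if_neg h]
      exact ((measurable_const.mul (hfm.comp measurable_fst))).mul (hgm.comp measurable_snd)
  have bV : ∀ (p : Fin k × Fin k) (x y : ℝ), |V p x y| ≤ 2 := by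
    intro p x y
    rw [hVdef]
    simp only
    rw [abs_mul, abs_mul]
    have h1 : |if p.1 ≠ p.2 then homDensity2 H W₁ p.1 p.2 x y
        - homDensity2 H W₂ p.1 p.2 x y else 0| ≤ 2 := by
      split_ifs with h
      · have q1 := abs_homDensity2_le H h₁b p.1 p.2 x y
        have q2 := abs_homDensity2_le H h₂b p.1 p.2 x y
        calc |homDensity2 H W₁ p.1 p.2 x y - homDensity2 H W₂ p.1 p.2 x y|
            ≤ |homDensity2 H W₁ p.1 p.2 x y| + |homDensity2 H W₂ p.1 p.2 x y| :=
              abs_sub _ _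
          _ ≤ 2 := by linarith
      · simp
    have h2 := abs_le_one_of_mem01 (hf1 x)
    have h3 := abs_le_one_of_mem01 (hg1 y)
    calc |if p.1 ≠ p.2 then homDensity2 H W₁ p.1 p.2 x y
        - homDensity2 H W₂ p.1 p.2 x y else 0| * |f x| * |g y|
        ≤ 2 * 1 * 1 := by
          gcongr <;> exact abs_nonneg _
      _ = 2 := by ring
  -- pointwise identity
  have hpt : ∀ x y : ℝ, (condKernel H W₁ x y - condKernel H W₂ x y) * f x * g y
      = (∑ p : Fin k × Fin k, V p x y) / A2 := by
    intro x y
    have h1 : condKernel H W₁ x y - condKernel H W₂ x y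
        = (∑ p : Fin k × Fin k, (if p.1 ≠ p.2 then homDensity2 H W₁ p.1 p.2 x y
            - homDensity2 H W₂ p.1 p.2 x y else 0)) / A2 := by
      unfold condKernel
      rw [hA2def, div_sub_div_same]
      congr 1
      rw [← Finset.univ_product_univ, Finset.sum_product]
      rw [← Finset.sum_sub_distrib]
      refine Finset.sum_congr rfl fun a _ => ?_
      rw [← Finset.sum_sub_distrib]
      refine Finset.sum_congr rfl fun b _ => ?_
      by_cases h : a ≠ b
      · simp only [if_pos h]
      · simp only [if_neg h]
        ring
    rw [h1, div_mul_eq_mul_div, div_mul_eq_mul_div]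
    congr 1
    rw [Finset.sum_mul, Finset.sum_mul]
  -- push sums out of the integrals
  have push1 : ∀ x : ℝ, ∫ y, (∑ p : Fin k × Fin k, V p x y) ∂mu01
      = ∑ p : Fin k × Fin k, ∫ y, V p x y ∂mu01 := by
    intro x
    refine integral_finset_sum _ fun p _ => ?_
    refine integrable_bdd (c := 2)
      (((mV p).comp (measurable_const.prodMk measurable_id)).aestronglyMeasurable) ?_
    intro y
    exact bV p x y
  have push2 : ∫ x, (∑ p : Fin k × Fin k, ∫ y, V p x y ∂mu01) ∂mu01
      = ∑ p : Fin k × Fin k, ∫ x, ∫ y, V p x y ∂mu01 ∂mu01 := by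
    refine integral_finset_sum _ fun p _ => ?_
    refine integrable_bdd (c := 2)
      (((mV p).stronglyMeasurable.integral_prod_right').measurable.aestronglyMeasurable) ?_
    intro x
    exact abs_integral_le_of_bound mu01 (fun y => bV p x y)
  have echain : ∫ x, ∫ y, (condKernel H W₁ x y - condKernel H W₂ x y)
        * f x * g y ∂mu01 ∂mu01
      = (∑ p : Fin k × Fin k, ∫ x, ∫ y, V p x y ∂mu01 ∂mu01) / A2 := by
    calc ∫ x, ∫ y, (condKernel H W₁ x y - condKernel H W₂ x y) * f x * g y ∂mu01 ∂mu01
        = ∫ x, ∫ y, (∑ p : Fin k × Fin k, V p x y) / A2 ∂mu01 ∂mu01 := by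
          congr 1; funext x; congr 1; funext y; exact hpt x y
      _ = ∫ x, (∑ p : Fin k × Fin k, ∫ y, V p x y ∂mu01) / A2 ∂mu01 := by
          congr 1; funext x
          rw [integral_div, push1 x]
      _ = (∫ x, (∑ p : Fin k × Fin k, ∫ y, V p x y ∂mu01) ∂mu01) / A2 := by
          rw [integral_div]
      _ = _ := by rw [push2]
  rw [echain]
  -- per-pair bound
  have hper : ∀ p : Fin k × Fin k,
      |∫ x, ∫ y, V p x y ∂mu01 ∂mu01| ≤ ((k * k : ℕ) : ℝ) * κ := by
    intro p
    by_cases h : p.1 ≠ p.2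
    · have heq : ∫ x, ∫ y, V p x y ∂mu01 ∂mu01
          = ∫ x, ∫ y, (homDensity2 H W₁ p.1 p.2 x y - homDensity2 H W₂ p.1 p.2 x y)
            * f x * g y ∂mu01 ∂mu01 := by
        congr 1; funext x; congr 1; funext y
        rw [hVdef]; simp only [if_pos h]
      rw [heq]
      exact pair_bound H W₁ W₂ h₁m h₁b h₂m h₂b p.1 p.2 h f g hfm hf1 hgm hg1 κ hκle
    · have heq : ∫ x, ∫ y, V p x y ∂mu01 ∂mu01 = 0 := by
        have : ∀ x y : ℝ, V p x y = 0 := by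
          intro x y; rw [hVdef]; simp only [if_neg h]; ring
        simp only [this, integral_zero]
      rw [heq]
      simp only [abs_zero]
      positivity
  calc |(∑ p : Fin k × Fin k, ∫ x, ∫ y, V p x y ∂mu01 ∂mu01) / A2|
      ≤ |∑ p : Fin k × Fin k, ∫ x, ∫ y, V p x y ∂mu01 ∂mu01| := by
        rw [abs_div]
        rw [abs_of_pos (by linarith : (0:ℝ) < A2)]
        exact div_le_self (abs_nonneg _) hA2
    _ ≤ ∑ p : Fin k × Fin k, |∫ x, ∫ y, V p x y ∂mu01 ∂mu01| :=
        Finset.abs_sum_le_sum_abs _ _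
    _ ≤ ∑ _p : Fin k × Fin k, ((k * k : ℕ) : ℝ) * κ :=
        Finset.sum_le_sum fun p _ => hper p
    _ = ((k * k * (k * k) : ℕ) : ℝ) * κ := by
        rw [Finset.sum_const, Finset.card_univ, Fintype.card_prod, Fintype.card_fin]
        push_cast
        ring
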